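/- Let I ⊆ ℝ be an open interval, ŝ₀ ∈ I, and let Y₀, Z₀ ∈ ℂ^{n×n} with Y₀ invertible such that H₀ := Z₀Y₀⁻¹ is symmetric with Im H₀ positive definite. Suppose Y, Z : I → ℂ^{n×n} are differentiable and satisfy Y'(s) = C Z(s) and Z'(s) = −D(s) Y(s) for all s ∈ I, with Y(ŝ₀) = Y₀ and Z(ŝ₀) = Z₀. Then Y(s) is invertible for every s ∈ I. -/

import Mathlib

open Matrix

attribute [local instance] Matrix.normedAddCommGroup Matrix.normedSpace

/-- The constant `n × n` matrix `C` with `C₁₁ = 0`, `C_jj = 2` for `j = 2, …, n`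
and `C_jk = 0` off the diagonal (indices in `Fin n`, where `0 : Fin n`
corresponds to the index `1`). -/
def riccatiC (n : ℕ) : Matrix (Fin n) (Fin n) ℂ :=
  Matrix.of fun j k => if j = k ∧ (j : ℕ) ≠ 0 then 2 else 0

/-!
Take `v ≠ 0` with `Y(s) v = 0` and compare the Hermitian form of the Wronskian `W = Zᴴ Y - Yᴴ Z`
at `v` at the times `s` and `ŝ₀`. Since `C` and `D` are Hermitian, `W` is constant along
solutions of `Y' = C Z`, `Z' = -D Y`. At time `s` the form vanishes because `Y(s) v = 0`.
At time `ŝ₀`, writing `Z₀ = H₀ Y₀` and `x = Y₀ v ≠ 0`, it equals `conj z - z = -2i Im z` for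
`z = xᴴ H₀ x`, and for symmetric `H₀` one has
`Im z = (Re x)ᵀ (Im H₀) (Re x) + (Im x)ᵀ (Im H₀) (Im x) > 0`.
-/

open ComplexConjugate

section MatrixCalculus

variable {𝕜 R : Type*} [NontriviallyNormedField 𝕜] [NormedRing R] [NormedAlgebra 𝕜 R]
  {l m n : Type*} {x : 𝕜}

theorem hasDerivAt_matrix_iff [Fintype n] {f : 𝕜 → Matrix m n R} {f' : Matrix m n R} :
    HasDerivAt f f' x ↔ ∀ i j, HasDerivAt (fun t => f t i j) (f' i j) x := by
  refine hasDerivAt_pi.trans (forall_congr' fun i => ?_)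
  exact hasDerivAt_pi

theorem HasDerivAt.matrix_mul [Fintype l] [Fintype m] [Fintype n] {f : 𝕜 → Matrix l m R}
    {g : 𝕜 → Matrix m n R} {f' : Matrix l m R} {g' : Matrix m n R} (hf : HasDerivAt f f' x)
    (hg : HasDerivAt g g' x) : HasDerivAt (fun t => f t * g t) (f' * g x + f x * g') x := by
  rw [hasDerivAt_matrix_iff] at *
  intro i k
  simp only [mul_apply, Matrix.add_apply, ← Finset.sum_add_distrib]
  exact HasDerivAt.fun_sum fun j _ => (hf i j).fun_mul (hg j k)

theorem HasDerivAt.matrix_conjTranspose [Fintype m] [Fintype n] [StarRing 𝕜] [TrivialStar 𝕜]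
    [StarRing R] [ContinuousStar R] [StarModule 𝕜 R] {f : 𝕜 → Matrix m n R}
    {f' : Matrix m n R} (hf : HasDerivAt f f' x) : HasDerivAt (fun t => (f t)ᴴ) f'ᴴ x := by
  rw [hasDerivAt_matrix_iff] at *
  exact fun i j => (hf j i).star

end MatrixCalculus

theorem Convex.eq_of_hasDerivAt_zero {E : Type*} [NormedAddCommGroup E] [NormedSpace ℝ E]
    {S : Set ℝ} (hS : Convex ℝ S) {f : ℝ → E} (hf : ∀ s ∈ S, HasDerivAt f 0 s) {s t : ℝ}
    (hs : s ∈ S) (ht : t ∈ S) : f s = f t := by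
  have := hS.norm_image_sub_le_of_norm_hasDerivWithin_le
    (fun u hu => (hf u hu).hasDerivWithinAt) (fun _ _ => norm_zero.le) ht hs
  rwa [zero_mul, norm_le_zero_iff, sub_eq_zero] at this

section Wronskian

variable {R m n : Type*} [Fintype m]

def wronskian [Ring R] [StarRing R] (Y Z : Matrix m n R) : Matrix n n R := Zᴴ * Y - Yᴴ * Z

theorem star_dotProduct_wronskian_mulVec [Fintype n] [Ring R] [StarRing R]
    (Y Z : Matrix m n R) (v : n → R) :
    star v ⬝ᵥ (wronskian Y Z *ᵥ v) = star (Z *ᵥ v) ⬝ᵥ (Y *ᵥ v) - star (Y *ᵥ v) ⬝ᵥ (Z *ᵥ v) := by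
  rw [wronskian, sub_mulVec, dotProduct_sub, ← mulVec_mulVec, ← mulVec_mulVec,
    dotProduct_mulVec (star v) Zᴴ, dotProduct_mulVec (star v) Yᴴ, ← star_mulVec, ← star_mulVec]

variable [Fintype n] [NormedRing R] [NormedAlgebra ℝ R] [StarRing R] [ContinuousStar R]
  [StarModule ℝ R]

theorem hasDerivAt_wronskian_eq_zero {C D : Matrix m m R} (hC : C.IsHermitian)
    (hD : D.IsHermitian) {Y Z : ℝ → Matrix m n R} {s : ℝ} (hY : HasDerivAt Y (C * Z s) s)
    (hZ : HasDerivAt Z (-(D * Y s)) s) :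
    HasDerivAt (fun t => wronskian (Y t) (Z t)) 0 s := by
  refine ((hZ.matrix_conjTranspose.matrix_mul hY).fun_sub
    (hY.matrix_conjTranspose.matrix_mul hZ)).congr_deriv ?_
  simp only [conjTranspose_neg, conjTranspose_mul, hC.eq, hD.eq, Matrix.neg_mul,
    Matrix.mul_neg, Matrix.mul_assoc]
  abel

theorem wronskian_eq_of_hasDerivAt {S : Set ℝ} (hS : Convex ℝ S) {C : Matrix m m R}
    (hC : C.IsHermitian) {D : ℝ → Matrix m m R} (hD : ∀ s ∈ S, (D s).IsHermitian)
    {Y Z : ℝ → Matrix m n R} (hY : ∀ s ∈ S, HasDerivAt Y (C * Z s) s)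
    (hZ : ∀ s ∈ S, HasDerivAt Z (-(D s * Y s)) s) {s t : ℝ} (hs : s ∈ S) (ht : t ∈ S) :
    wronskian (Y s) (Z s) = wronskian (Y t) (Z t) :=
  hS.eq_of_hasDerivAt_zero
    (fun u hu => hasDerivAt_wronskian_eq_zero hC (hD u hu) (hY u hu) (hZ u hu)) hs ht

end Wronskian

section ImaginaryPart

variable {m : Type*} [Fintype m]

theorem Matrix.IsSymm.im_star_dotProduct_mulVec {H : Matrix m m ℂ} (hH : H.IsSymm)
    (x : m → ℂ) :
    (star x ⬝ᵥ (H *ᵥ x)).im = (Complex.re ∘ x) ⬝ᵥ (H.map Complex.im *ᵥ (Complex.re ∘ x))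
      + (Complex.im ∘ x) ⬝ᵥ (H.map Complex.im *ᵥ (Complex.im ∘ x)) := by
  set f : m → m → ℝ := fun j k => (conj (x j) * (H j k * x k)).im
  set g : m → m → ℝ := fun j k => (H j k).im * ((x j).re * (x k).re + (x j).im * (x k).im)
  have hf : (star x ⬝ᵥ (H *ᵥ x)).im = ∑ j, ∑ k, f j k := by
    simp [f, dotProduct, mulVec, Finset.mul_sum, Complex.im_sum]
  have hg : (Complex.re ∘ x) ⬝ᵥ (H.map Complex.im *ᵥ (Complex.re ∘ x))
      + (Complex.im ∘ x) ⬝ᵥ (H.map Complex.im *ᵥ (Complex.im ∘ x)) = ∑ j, ∑ k, g j k := by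
    simp only [g, dotProduct, mulVec, Finset.mul_sum, ← Finset.sum_add_distrib]
    refine Finset.sum_congr rfl fun j _ => Finset.sum_congr rfl fun k _ => ?_
    simp only [Function.comp_apply, map_apply]
    ring
  -- symmetrizing in `(j, k)` cancels the contribution of `re H`
  have hfg : ∀ j k, f j k + f k j = 2 * g j k := by
    intro j k
    simp only [f, g, hH.apply j k, Complex.mul_im, Complex.mul_re, Complex.conj_re,
      Complex.conj_im]
    ring
  have hsum : 2 * ∑ j, ∑ k, f j k = 2 * ∑ j, ∑ k, g j k :=
    calc 2 * ∑ j, ∑ k, f j k = ∑ j, ∑ k, f j k + ∑ j, ∑ k, f k j := by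
          rw [Finset.sum_comm (f := fun j k => f k j)]; ring
      _ = 2 * ∑ j, ∑ k, g j k := by
          simp only [← Finset.sum_add_distrib, hfg, Finset.mul_sum]
  rw [hf, hg]
  linarith

theorem Matrix.IsSymm.im_star_dotProduct_mulVec_pos {H : Matrix m m ℂ} (hH : H.IsSymm)
    (hpos : (H.map Complex.im).PosDef) {x : m → ℂ} (hx : x ≠ 0) :
    0 < (star x ⬝ᵥ (H *ᵥ x)).im := by
  have hre := hpos.posSemidef.dotProduct_mulVec_nonneg (Complex.re ∘ x)
  have him := hpos.posSemidef.dotProduct_mulVec_nonneg (Complex.im ∘ x)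
  have hx' : Complex.re ∘ x ≠ 0 ∨ Complex.im ∘ x ≠ 0 := by
    contrapose! hx
    exact funext fun j => Complex.ext (congrFun hx.1 j) (congrFun hx.2 j)
  rw [hH.im_star_dotProduct_mulVec]
  rcases hx' with h | h <;> have := hpos.dotProduct_mulVec_pos h <;>
    simp only [star_trivial] at hre him this <;> linarith

end ImaginaryPart

theorem riccatiC_isHermitian (n : ℕ) : (riccatiC n).IsHermitian := by
  ext j k
  simp only [riccatiC, conjTranspose_apply, of_apply]
  by_cases h : j = k
  · subst h
    split_ifs <;> simp
  · simp [h, Ne.symm h]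

theorem Y_invertible_general
    (n : ℕ) (I : Set ℝ) (hIconn : I.OrdConnected)
    (D : ℝ → Matrix (Fin n) (Fin n) ℝ)
    (hDsymm : ∀ s ∈ I, (D s).IsSymm)
    (s₀ : ℝ) (hs₀ : s₀ ∈ I)
    (Y₀ Z₀ : Matrix (Fin n) (Fin n) ℂ) (hY₀ : IsUnit Y₀)
    (hH₀symm : (Z₀ * Y₀⁻¹).IsSymm)
    (hH₀pos : ((Z₀ * Y₀⁻¹).map Complex.im).PosDef)
    (Y Z : ℝ → Matrix (Fin n) (Fin n) ℂ)
    (hY : ∀ s ∈ I, HasDerivAt Y (riccatiC n * Z s) s)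
    (hZ : ∀ s ∈ I, HasDerivAt Z (-((D s).map (fun x => (x : ℂ)) * Y s)) s)
    (hY0 : Y s₀ = Y₀) (hZ0 : Z s₀ = Z₀) :
    ∀ s ∈ I, IsUnit (Y s) := by
  intro s hs
  by_contra hYs
  obtain ⟨v, hv, hYv⟩ : ∃ v ≠ 0, Y s *ᵥ v = 0 := by
    rw [exists_mulVec_eq_zero_iff]
    simpa [isUnit_iff_isUnit_det, isUnit_iff_ne_zero] using hYs
  set x := Y₀ *ᵥ v
  have hx : x ≠ 0 := fun h =>
    hv (mulVec_injective_iff_isUnit.mpr hY₀ (h.trans (mulVec_zero Y₀).symm))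
  have hZ₀v : Z₀ *ᵥ v = (Z₀ * Y₀⁻¹) *ᵥ x := by
    rw [mulVec_mulVec, nonsing_inv_mul_cancel_right _ _ ((isUnit_iff_isUnit_det _).mp hY₀)]
  have hW : wronskian (Y s) (Z s) = wronskian Y₀ Z₀ := by
    rw [← hY0, ← hZ0]
    exact wronskian_eq_of_hasDerivAt hIconn.convex (riccatiC_isHermitian n)
      (fun u hu => (isHermitian_iff_isSymm.mpr (hDsymm u hu)).map _
        fun a => (Complex.conj_ofReal a).symm) hY hZ hs hs₀
  have hform := congrArg (fun W => star v ⬝ᵥ (W *ᵥ v)) hW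
  simp only [star_dotProduct_wronskian_mulVec, hYv, hZ₀v, dotProduct_zero, star_zero,
    zero_dotProduct, sub_zero] at hform
  rw [star_dotProduct, eq_comm, sub_eq_zero, Complex.star_def, Complex.conj_eq_iff_im] at hform
  exact (hH₀symm.im_star_dotProduct_mulVec_pos hH₀pos hx).ne' hform

/-- If `Y, Z` solve the first order linear system `Y' = C Z`,
`Z' = -D Y` on an open interval `I` with `Y(ŝ₀) = Y₀` invertible, `Z(ŝ₀) = Z₀`,
where `H₀ = Z₀ Y₀⁻¹` is symmetric with positive definite imaginary part, then
`Y(s)` is invertible for every `s ∈ I`. -/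
theorem Y_invertible
    (n : ℕ) (hn : 1 ≤ n) (I : Set ℝ) (hIopen : IsOpen I) (hIconn : I.OrdConnected)
    (D : ℝ → Matrix (Fin n) (Fin n) ℝ) (hDcont : ContinuousOn D I)
    (hDsymm : ∀ s ∈ I, (D s).IsSymm)
    (s₀ : ℝ) (hs₀ : s₀ ∈ I)
    (Y₀ Z₀ : Matrix (Fin n) (Fin n) ℂ) (hY₀ : IsUnit Y₀)
    (hH₀symm : (Z₀ * Y₀⁻¹).IsSymm)
    (hH₀pos : ((Z₀ * Y₀⁻¹).map Complex.im).PosDef)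
    (Y Z : ℝ → Matrix (Fin n) (Fin n) ℂ)
    (hY : ∀ s ∈ I, HasDerivAt Y (riccatiC n * Z s) s)
    (hZ : ∀ s ∈ I, HasDerivAt Z (-((D s).map (fun x => (x : ℂ)) * Y s)) s)
    (hY0 : Y s₀ = Y₀) (hZ0 : Z s₀ = Z₀) :
    ∀ s ∈ I, IsUnit (Y s) :=
  Y_invertible_general n I hIconn D hDsymm s₀ hs₀ Y₀ Z₀ hY₀ hH₀symm hH₀pos Y Z hY hZ hY0 hZ0
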